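/- arXiv:1410.8380 — 3 statements merged into one kernel-verified Lean document; each statement's English description precedes it below -/
import Mathlib

section
/- No proper subgroup of GL₂(F₅) with order divisible by 5 contains an element of order 24. -/
/-!
Let `g ∈ H` have order 24. Then `120 ∣ |H|`, so `H` has index at most 4 in the group of order 480.
An element of order 5 lies in every subgroup of index `< 5`, since the normal core has index
dividing `4!`; in particular `H` contains all elementary matrices `[1, x; 0, 1]` and `[1, 0; x, 1]`,
which generate `SL₂(F₅)`. On the other hand `det g` generates `F₅ˣ`: otherwise `g²` would be an
element of order 12 in `SL₂(F₅)`, whereas by Cayley–Hamilton every element of `SL₂(F₅)` has order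
dividing 4, 6 or 10. Hence `H ⊇ SL₂(F₅)` and `det H = F₅ˣ`, so `H` is everything.
-/

open Matrix Polynomial

namespace Subgroup

variable {G : Type*} [Group G]

theorem mem_of_pow_eq_one_of_index_lt (H : Subgroup G) [H.FiniteIndex] {p : ℕ} (hp : p.Prime)
    {x : G} (hx : x ^ p = 1) (hH : H.index < p) : x ∈ H := by
  have hcore : H.normalCore.index ∣ H.index.factorial := by
    rw [normalCore_eq_ker, index_ker, index_eq_card, ← Nat.card_perm]
    exact card_subgroup_dvd_card _
  have hcop : H.normalCore.index.Coprime (orderOf x) :=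
    (Nat.Coprime.coprime_dvd_left hcore ((hp.coprime_iff_not_dvd.mpr
      (by simpa [hp.dvd_factorial] using hH)).symm)).coprime_dvd_right
      (orderOf_dvd_of_pow_eq_one hx)
  obtain ⟨m, hm⟩ := exists_pow_eq_self_of_coprime hcop
  rw [← hm]
  exact pow_mem (H.normalCore_le (H.normalCore.pow_index_mem x)) m

theorem eq_top_of_ker_le_of_map_eq_top {A : Type*} [Group A] {H : Subgroup G} {f : G →* A}
    (hker : f.ker ≤ H) (hmap : H.map f = ⊤) : H = ⊤ := by
  rw [← sup_eq_left.mpr hker, ← comap_map_eq, hmap, comap_top]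

end Subgroup

theorem AddChar.pow_eq_one_of_zmod {G : Type*} [Monoid G] {n : ℕ} (ψ : AddChar (ZMod n) G)
    (x : ZMod n) : ψ x ^ n = 1 := by
  rw [← AddChar.map_nsmul_eq_pow, nsmul_eq_mul, ZMod.natCast_self, zero_mul,
    AddChar.map_zero_eq_one]

theorem Polynomial.pow_eq_one_of_aeval_eq_zero_of_dvd {R A : Type*} [CommRing R] [Ring A]
    [Algebra R A] {M : A} {p : R[X]} (hM : aeval M p = 0) {k : ℕ} (hk : p ∣ X ^ k - 1) :
    M ^ k = 1 := by
  obtain ⟨r, hr⟩ := hk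
  simpa [sub_eq_zero, hM] using congrArg (aeval M) hr

namespace Matrix.GeneralLinearGroup

@[simps apply]
def lowerLeftHom {R : Type*} [Ring R] : AddChar R (GL (Fin 2) R) where
  toFun x := ⟨!![1, 0; x, 1], !![1, 0; -x, 1], by simp [one_fin_two], by simp [one_fin_two]⟩
  map_zero_eq_one' := by simp [Units.ext_iff, one_fin_two]
  map_add_eq_mul' a b := by simp [Units.ext_iff, add_comm]

section Field

variable {K : Type*} [Field K]

theorem mem_closure_upperRight_lowerLeft_of_ne_zero {M : GL (Fin 2) K} (hM : det M = 1)
    (hc : M 1 0 ≠ 0) :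
    M ∈ Subgroup.closure (Set.range upperRightHom ∪ Set.range lowerLeftHom) := by
  have hdet : M 0 0 * M 1 1 - M 0 1 * M 1 0 = 1 := by
    rw [← det_fin_two, ← val_det_apply, hM, Units.val_one]
  have hM : M = upperRightHom ((M 0 0 - 1) / M 1 0) * lowerLeftHom (M 1 0) *
      upperRightHom ((M 1 1 - 1) / M 1 0) := by
    ext i j
    fin_cases i <;> fin_cases j <;> simp [mul_apply, Fin.sum_univ_two]
    · field_simp
      ring
    · field_simp
      linear_combination -hdet
    · field_simp
      ring
  rw [hM]
  exact mul_mem (mul_mem (Subgroup.subset_closure (.inl ⟨_, rfl⟩))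
    (Subgroup.subset_closure (.inr ⟨_, rfl⟩))) (Subgroup.subset_closure (.inl ⟨_, rfl⟩))

theorem ker_det_le_closure_upperRight_lowerLeft :
    (det : GL (Fin 2) K →* Kˣ).ker ≤
      Subgroup.closure (Set.range upperRightHom ∪ Set.range lowerLeftHom) := by
  intro M hM
  rw [MonoidHom.mem_ker] at hM
  by_cases hc : M 1 0 = 0
  · have ha : M 0 0 ≠ 0 := by
      have := congrArg Units.val hM
      rw [val_det_apply, det_fin_two, hc] at this
      exact left_ne_zero_of_mul_eq_one (by simpa using this)
    have hLM : det (lowerLeftHom 1 * M) = 1 := by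
      rw [map_mul, hM, mul_one]
      ext
      simp [val_det_apply]
    have := mul_mem (Subgroup.subset_closure (.inr ⟨-1, rfl⟩)) <|
      mem_closure_upperRight_lowerLeft_of_ne_zero hLM
        (by simpa [mul_apply, Fin.sum_univ_two, hc] using ha)
    rwa [← mul_assoc, ← AddChar.map_add_eq_mul, neg_add_cancel, AddChar.map_zero_eq_one,
      one_mul] at this
  · exact mem_closure_upperRight_lowerLeft_of_ne_zero hM hc

end Field

theorem ker_det_le_of_index_lt {p : ℕ} [Fact p.Prime] (H : Subgroup (GL (Fin 2) (ZMod p)))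
    (hH : H.index < p) : (det : GL (Fin 2) (ZMod p) →* (ZMod p)ˣ).ker ≤ H := by
  refine ker_det_le_closure_upperRight_lowerLeft.trans ((Subgroup.closure_le H).mpr ?_)
  rintro _ (⟨x, rfl⟩ | ⟨x, rfl⟩) <;>
    exact H.mem_of_pow_eq_one_of_index_lt Fact.out (AddChar.pow_eq_one_of_zmod _ x) hH

end Matrix.GeneralLinearGroup

section ZModFive

local instance : Fact (Nat.Prime 5) := ⟨Nat.prime_five⟩

theorem Matrix.pow_four_or_pow_six_or_pow_ten_eq_one_of_det_eq_one
    {M : Matrix (Fin 2) (Fin 2) (ZMod 5)} (h : M.det = 1) :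
    M ^ 4 = 1 ∨ M ^ 6 = 1 ∨ M ^ 10 = 1 := by
  have hM : aeval M (X ^ 2 - C M.trace * X + 1) = 0 := by
    simpa [charpoly_fin_two, h] using aeval_self_charpoly M
  have hfrob : (X ^ 10 - 1 : (ZMod 5)[X]) = (X - 1) ^ 5 * (X + 1) ^ 5 := by
    rw [sub_pow_char, add_pow_char, one_pow]
    ring
  obtain ht | ht | ht | ht | ht :
      M.trace = 0 ∨ M.trace = 1 ∨ M.trace = -1 ∨ M.trace = 2 ∨ M.trace = -2 := by
    generalize M.trace = t
    decide +revert
  all_goals simp only [ht, map_zero, map_one, map_neg, map_ofNat] at hM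
  · exact .inl (pow_eq_one_of_aeval_eq_zero_of_dvd hM ⟨X ^ 2 - 1, by ring⟩)
  · exact .inr (.inl (pow_eq_one_of_aeval_eq_zero_of_dvd hM ⟨(X + 1) * (X ^ 3 - 1), by ring⟩))
  · exact .inr (.inl (pow_eq_one_of_aeval_eq_zero_of_dvd hM ⟨(X - 1) * (X ^ 3 + 1), by ring⟩))
  · refine .inr (.inr (pow_eq_one_of_aeval_eq_zero_of_dvd hM ⟨(X - 1) ^ 3 * (X + 1) ^ 5, ?_⟩))
    rw [hfrob]
    ring
  · refine .inr (.inr (pow_eq_one_of_aeval_eq_zero_of_dvd hM ⟨(X - 1) ^ 5 * (X + 1) ^ 3, ?_⟩))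
    rw [hfrob]
    ring

theorem Matrix.GeneralLinearGroup.orderOf_dvd_four_or_six_or_ten_of_det_eq_one
    {g : GL (Fin 2) (ZMod 5)} (hg : det g = 1) :
    orderOf g ∣ 4 ∨ orderOf g ∣ 6 ∨ orderOf g ∣ 10 := by
  simp only [orderOf_dvd_iff_pow_eq_one, Units.ext_iff, Units.val_pow_eq_pow_val, Units.val_one]
  exact pow_four_or_pow_six_or_pow_ten_eq_one_of_det_eq_one
    (by rw [← val_det_apply, hg, Units.val_one])

theorem Matrix.GeneralLinearGroup.orderOf_det_eq_four_of_orderOf_eq_24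
    {g : GL (Fin 2) (ZMod 5)} (hg : orderOf g = 24) : orderOf (det g) = 4 := by
  refine orderOf_eq_prime_pow (p := 2) (n := 1) (fun h ↦ ?_)
    (ZMod.units_pow_card_sub_one_eq_one 5 _)
  have hg2 : orderOf (g ^ 2) = 12 := by
    rw [orderOf_pow_of_dvd (by norm_num) (by rw [hg]; norm_num), hg]
  have := orderOf_dvd_four_or_six_or_ten_of_det_eq_one (by rwa [map_pow] : det (g ^ 2) = 1)
  rw [hg2] at this
  omega

end ZModFive

theorem stmt_4 (H : Subgroup (Matrix.GeneralLinearGroup (Fin 2) (ZMod 5)))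
    (hH : H ≠ ⊤) (h5 : 5 ∣ Nat.card H) :
    ∀ g ∈ H, orderOf g ≠ 24 := by
  intro g hg hord
  have : Fact (Nat.Prime 5) := ⟨Nat.prime_five⟩
  have hcard : Nat.card H * H.index = 120 * 4 := by
    rw [Subgroup.card_mul_index, card_GL_field]
    simp [Fin.prod_univ_two, ZMod.card]
  have h120 : 120 ∣ Nat.card H :=
    Nat.Coprime.mul_dvd_of_dvd_of_dvd (by norm_num) (hord ▸ H.orderOf_dvd_natCard hg) h5
  have hindex : H.index ∣ 4 :=
    Nat.dvd_of_mul_dvd_mul_left (by norm_num) (hcard ▸ mul_dvd_mul_right h120 _)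
  have hker := GeneralLinearGroup.ker_det_le_of_index_lt H
    (Nat.lt_succ_of_le (Nat.le_of_dvd (by norm_num) hindex))
  have hdet : Subgroup.zpowers (GeneralLinearGroup.det g) = ⊤ := by
    refine Subgroup.eq_top_of_card_eq _ ?_
    rw [Nat.card_zpowers, GeneralLinearGroup.orderOf_det_eq_four_of_orderOf_eq_24 hord,
      Nat.card_eq_fintype_card, ZMod.card_units]
  refine hH (Subgroup.eq_top_of_ker_le_of_map_eq_top hker (top_le_iff.mp ?_))
  exact hdet ▸ Subgroup.zpowers_le.mpr (Subgroup.mem_map_of_mem _ hg)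
end

section
/- The subgroup J = { [[a,b],[0,1]] : a ∈ F₅ˣ, b ∈ F₅ } of GL₂(F₅) contains no nontrivial subgroup that is normal in GL₂(F₅). -/
open Matrix

/-- The only subgroup of `J = { [[a,b],[0,1]] }` which is normal in `GL₂(𝔽₅)` is trivial. -/
theorem stmt_7 (K : Subgroup (Matrix.GeneralLinearGroup (Fin 2) (ZMod 5)))
    (hKJ : ∀ k ∈ K, ((k : Matrix.GeneralLinearGroup (Fin 2) (ZMod 5)) :
        Matrix (Fin 2) (Fin 2) (ZMod 5)) 1 0 = 0 ∧
      ((k : Matrix.GeneralLinearGroup (Fin 2) (ZMod 5)) :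
        Matrix (Fin 2) (Fin 2) (ZMod 5)) 1 1 = 1)
    (hK : K.Normal) : K = ⊥ := by
  ext k
  simp only [Subgroup.mem_bot]
  constructor
  · intro hk
    have h1 := hKJ k hk
    let w : Matrix.GeneralLinearGroup (Fin 2) (ZMod 5) :=
      ⟨!![0,1;1,0], !![0,1;1,0], by decide, by decide⟩
    have h2 := hKJ _ (hK.conj_mem k hk w)
    have hw : ((w : Matrix.GeneralLinearGroup (Fin 2) (ZMod 5)) :
        Matrix (Fin 2) (Fin 2) (ZMod 5)) = !![0,1;1,0] := rfl
    have hwi : ((w⁻¹ : Matrix.GeneralLinearGroup (Fin 2) (ZMod 5)) :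
        Matrix (Fin 2) (Fin 2) (ZMod 5)) = !![0,1;1,0] := rfl
    simp only [Units.val_mul, hw, hwi, Matrix.mul_apply, Fin.sum_univ_two] at h2
    have hb : ((k : Matrix.GeneralLinearGroup (Fin 2) (ZMod 5)) :
        Matrix (Fin 2) (Fin 2) (ZMod 5)) 0 1 = 0 := by
      have := h2.1
      simpa [Matrix.cons_val_zero, Matrix.cons_val_one] using this
    have ha : ((k : Matrix.GeneralLinearGroup (Fin 2) (ZMod 5)) :
        Matrix (Fin 2) (Fin 2) (ZMod 5)) 0 0 = 1 := by
      have := h2.2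
      simpa using this
    have hm : ((k : Matrix.GeneralLinearGroup (Fin 2) (ZMod 5)) :
        Matrix (Fin 2) (Fin 2) (ZMod 5)) = 1 := by
      ext i j
      fin_cases i <;> fin_cases j <;>
        simp [ha, hb, h1.1, h1.2, Matrix.one_apply]
    exact Units.ext hm
  · rintro rfl
    exact K.one_mem
end

section
/- Let K be a number field with ring of integers O_K, u ∈ O_K, and L = K(√u). Let p be a prime ideal of O_K with 2 ∈ p and u ∉ p. If u = b² - 4c for some b, c ∈ O_K, then p is unramified in L/K. -/
/-! With `θ = (b + √u)/2` and `f = X² - bX + c`, `θ` is an algebraic integer generating `L/K`,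
and `f'(θ) = 2θ - b = √u`. The minimal polynomial `m` of `θ` divides `f`, so `m'(θ) ∣ f'(θ)`,
and `m'(θ)` lies in the different ideal. If `P² ∣ p`, then `P` divides the different, hence
contains `√u`, and `u = (√u)² ∈ P ∩ 𝓞 K = p`. -/

open NumberField Polynomial

theorem Polynomial.aeval_derivative_dvd_of_dvd {R S : Type*} [CommRing R] [CommRing S]
    [Algebra R S] {x : S} {f g : R[X]} (hfg : f ∣ g) (hf : aeval x f = 0) :
    aeval x (derivative f) ∣ aeval x (derivative g) := by
  obtain ⟨q, rfl⟩ := hfg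
  simp [derivative_mul, hf]

section Different

variable {A B : Type*} (K L : Type*) [CommRing A] [Field K] [CommRing B] [Field L]
  [Algebra A K] [Algebra B L] [Algebra A B] [Algebra K L] [Algebra A L]
  [IsScalarTower A K L] [IsScalarTower A B L] [IsFractionRing A K]
  [FiniteDimensional K L] [Algebra.IsSeparable K L]
  [IsIntegralClosure B A L] [IsDedekindDomain A] [IsDedekindDomain B]
  [Module.IsTorsionFree A B]

theorem aeval_derivative_mem_of_dvd_differentIdeal {P : Ideal B}
    (hP : P ∣ differentIdeal A B) {x : B} (hx : Algebra.adjoin K {algebraMap B L x} = ⊤)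
    {g : A[X]} (hg : aeval x g = 0) : aeval x (derivative g) ∈ P := by
  obtain ⟨r, hr⟩ := aeval_derivative_dvd_of_dvd
    (minpoly.isIntegrallyClosed_dvd (IsIntegralClosure.isIntegral A L x) hg) (minpoly.aeval A x)
  rw [hr]
  exact P.mul_mem_right r
    (Ideal.le_of_dvd hP (aeval_derivative_mem_differentIdeal A K L x hx))

theorem ramificationIdx'_eq_one_of_aeval_derivative_notMem [IsFractionRing B L]
    [Module.Finite A B] {p : Ideal A} [p.IsMaximal]
    (hp : p ≠ ⊥) {P : Ideal B} (hPp : P.comap (algebraMap A B) = p) {x : B}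
    (hx : Algebra.adjoin K {algebraMap B L x} = ⊤) {g : A[X]} (hg : aeval x g = 0)
    (hg' : aeval x (derivative g) ∉ P) : Ideal.ramificationIdx' p P = 1 := by
  by_contra h
  rw [← ne_eq, Ideal.ramificationIdx'_ne_one_iff (Ideal.map_le_iff_le_comap.mpr hPp.ge)] at h
  have hdiff := pow_sub_one_dvd_differentIdeal_aux A K L P two_ne_zero hp (Ideal.dvd_iff_le.mpr h)
  rw [pow_one] at hdiff
  exact hg' (aeval_derivative_mem_of_dvd_differentIdeal K L hdiff hx hg)

end Different

theorem aeval_half_add_sqrt_eq_zero {R L : Type*} [CommRing R] [Field L] [Algebra R L]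
    [NeZero (2 : L)] {b c : R} {s : L} (hs : s ^ 2 = algebraMap R L (b ^ 2 - 4 * c)) :
    aeval ((algebraMap R L b + s) / 2) (X ^ 2 - C b * X + C c) = 0 := by
  simp only [map_sub, map_mul, map_pow, map_ofNat] at hs
  simp only [map_add, map_sub, map_mul, map_pow, aeval_X, aeval_C]
  field_simp
  linear_combination hs

theorem aeval_derivative_X_sq_sub_C_mul_X_add_C {R S : Type*} [CommRing R] [CommRing S]
    [Algebra R S] (b c : R) (x : S) :
    aeval x (derivative (X ^ 2 - C b * X + C c)) = 2 * x - algebraMap R S b := by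
  simp only [derivative_add, derivative_X_sq, derivative_C_mul_X, derivative_C, add_zero,
    map_sub, map_mul, aeval_X, aeval_C, map_ofNat]

theorem Algebra.adjoin_singleton_eq_top_of_two_mul_sub_algebraMap {K L : Type*} [CommRing K]
    [CommRing L] [Algebra K L] {s θ : L} {a : K} (hθ : 2 * θ - algebraMap K L a = s)
    (hs : Algebra.adjoin K {s} = ⊤) : Algebra.adjoin K {θ} = ⊤ := by
  rw [_root_.eq_top_iff, ← hs, Algebra.adjoin_le_iff, Set.singleton_subset_iff,
    SetLike.mem_coe, ← hθ, two_mul]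
  exact sub_mem (add_mem (Algebra.self_mem_adjoin_singleton K θ)
    (Algebra.self_mem_adjoin_singleton K θ)) (Subalgebra.algebraMap_mem _ a)

theorem NumberField.exists_ringOfIntegers_root_two_mul_sub_eq {K L : Type*} [Field K]
    [NumberField K] [Field L] [NumberField L] [Algebra K L] {b c : 𝓞 K} {s : L}
    (hs : s ^ 2 = algebraMap (𝓞 K) L (b ^ 2 - 4 * c)) :
    ∃ θ : 𝓞 L, aeval θ (X ^ 2 - C b * X + C c) = 0 ∧
      algebraMap (𝓞 L) L (2 * θ - algebraMap (𝓞 K) (𝓞 L) b) = s := by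
  have hroot := aeval_half_add_sqrt_eq_zero hs
  obtain ⟨θ, hθ⟩ := (IsIntegralClosure.isIntegral_iff (A := 𝓞 L)).mp
    ⟨_, by monicity!, hroot⟩
  refine ⟨θ, FaithfulSMul.algebraMap_injective (𝓞 L) L ?_, ?_⟩
  · rw [map_zero, ← aeval_algebraMap_apply, hθ, hroot]
  · rw [map_sub, map_mul, hθ, map_ofNat, ← IsScalarTower.algebraMap_apply]
    ring

theorem stmt_12_general (K L : Type*) [Field K] [NumberField K] [Field L] [NumberField L]
    [Algebra K L] (u : 𝓞 K) (s : L)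
    (hs : s ^ 2 = algebraMap K L (algebraMap (𝓞 K) K u))
    (hgen : Algebra.adjoin K {s} = ⊤)
    (p : Ideal (𝓞 K)) (hp : p.IsPrime) (hpbot : p ≠ ⊥)
    (hu : u ∉ p)
    (b c : 𝓞 K) (hbc : u = b ^ 2 - 4 * c) :
    ∀ P : Ideal (𝓞 L), P.IsPrime → P.comap (algebraMap (𝓞 K) (𝓞 L)) = p →
      Ideal.ramificationIdx' p P = 1 := by
  intro P _ hPp
  have := hp.isMaximal hpbot
  rw [← IsScalarTower.algebraMap_apply] at hs
  obtain ⟨θ, hroot, hθ⟩ := NumberField.exists_ringOfIntegers_root_two_mul_sub_eq (hbc ▸ hs)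
  have hsq : (2 * θ - algebraMap (𝓞 K) (𝓞 L) b) ^ 2 = algebraMap (𝓞 K) (𝓞 L) u := by
    apply FaithfulSMul.algebraMap_injective (𝓞 L) L
    rw [map_pow, hθ, hs, IsScalarTower.algebraMap_apply (𝓞 K) (𝓞 L) L]
  have hgenθ : Algebra.adjoin K {algebraMap (𝓞 L) L θ} = ⊤ := by
    refine Algebra.adjoin_singleton_eq_top_of_two_mul_sub_algebraMap (a := algebraMap (𝓞 K) K b)
      ?_ hgen
    rw [← hθ, map_sub, map_mul, map_ofNat, ← IsScalarTower.algebraMap_apply,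
      ← IsScalarTower.algebraMap_apply]
  refine ramificationIdx'_eq_one_of_aeval_derivative_notMem K L hpbot hPp hgenθ hroot ?_
  rw [aeval_derivative_X_sq_sub_C_mul_X_add_C]
  intro hmem
  apply hu
  rw [← hPp, Ideal.mem_comap, ← hsq]
  exact P.pow_mem_of_mem hmem 2 two_pos

/-- If `L = K(√u)` with `u ∈ 𝓞 K`, and `𝔭` is a prime of `𝓞 K` with `2 ∈ 𝔭`, `u ∉ 𝔭`,
and `u = b² - 4c` for some `b, c ∈ 𝓞 K`, then `𝔭` is unramified in `L/K`. -/
theorem stmt_12 (K L : Type*) [Field K] [NumberField K] [Field L] [NumberField L]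
    [Algebra K L] (u : 𝓞 K) (s : L)
    (hs : s ^ 2 = algebraMap K L (algebraMap (𝓞 K) K u))
    (hgen : Algebra.adjoin K {s} = ⊤)
    (hnsq : ¬ ∃ t : K, t ^ 2 = algebraMap (𝓞 K) K u)
    (p : Ideal (𝓞 K)) (hp : p.IsPrime) (hpbot : p ≠ ⊥)
    (h2 : (2 : 𝓞 K) ∈ p) (hu : u ∉ p)
    (b c : 𝓞 K) (hbc : u = b ^ 2 - 4 * c) :
    ∀ P : Ideal (𝓞 L), P.IsPrime → P.comap (algebraMap (𝓞 K) (𝓞 L)) = p →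
      Ideal.ramificationIdx' p P = 1 :=
  stmt_12_general K L u s hs hgen p hp hpbot hu b c hbc
end
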